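/- arXiv:2205.03791 — 3 statements merged into one kernel-verified Lean document; each statement's English description precedes it below -/
import Mathlib

section
/- Let m ≥ 2 and let L_m = P_2 □ P_m be the Cartesian product of the path P_2 = [u_1, u_2] with the path P_m = [v_1, ..., v_m] (a graph of order 2m). Then for each i ∈ {1,2}, the harmonic centrality of the vertex (u_i, v_j) in L_m equals (1/(2m-1))·(2·H_{m-1} + 1/m) if j = 1 or j = m, and equals (1/(2m-1))·(2·(H_{j-1} + H_{m-j}) + 1/j + 1/(m-j+1) - 1) if 1 < j < m, where H_n denotes the n-th harmonic number. -/
open SimpleGraph Finset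

/-- The harmonic centrality of a vertex `u` in a graph `G` of order `N`:
`(1/(N-1)) * Σ_{x ≠ u} 1/d(u,x)`, where `1/d(u,x) = 0` when there is no path
(Mathlib's `SimpleGraph.dist` is `0` for unreachable pairs, and `1/0 = 0` in `ℝ`). -/
noncomputable def harmonicCentrality {V : Type*} [Fintype V] [DecidableEq V]
    (G : SimpleGraph V) (u : V) : ℝ :=
  (∑ x ∈ Finset.univ.erase u, (1 : ℝ) / (G.dist u x)) / ((Fintype.card V : ℝ) - 1)

/-- The harmonic centralization of a graph `G` of order `N`:
`(Σ_u (Hmax - H_G(u))) / ((N-2)/2)` where `Hmax` is the largest harmonic centrality. -/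
noncomputable def harmonicCentralization {V : Type*} [Fintype V] [DecidableEq V]
    (G : SimpleGraph V) : ℝ :=
  (∑ u : V, ((⨆ v : V, harmonicCentrality G v) - harmonicCentrality G u)) /
    (((Fintype.card V : ℝ) - 2) / 2)

/-- The fan graph `F_m`: the join of a hub vertex (`none`) with the path `P_m`. -/
def fanGraph (m : ℕ) : SimpleGraph (Option (Fin m)) :=
  SimpleGraph.fromRel (fun x y =>
    x = none ∨ ∃ a b : Fin m, x = some a ∧ y = some b ∧ (SimpleGraph.pathGraph m).Adj a b)

/-- The direct (tensor) product of two simple graphs. -/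
def tensorProd {α β : Type*} (G : SimpleGraph α) (H : SimpleGraph β) :
    SimpleGraph (α × β) where
  Adj x y := G.Adj x.1 y.1 ∧ H.Adj x.2 y.2
  symm := ⟨fun x y h => ⟨h.1.symm, h.2.symm⟩⟩
  loopless := ⟨fun x h => G.loopless.irrefl x.1 h.1⟩

lemma natdist_le_length_path {n : ℕ} {a b : Fin n} (w : (pathGraph n).Walk a b) :
    Nat.dist a.val b.val ≤ w.length := by
  induction w with
  | nil => simp [Nat.dist]
  | @cons u v c h p ih =>
    rw [pathGraph_adj] at h
    simp only [SimpleGraph.Walk.length_cons]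
    simp only [Nat.dist] at ih ⊢
    omega

lemma pathGraph_dist_le (n : ℕ) : ∀ (k : ℕ) (a b : Fin n), a.val + k = b.val →
    (pathGraph n).dist a b ≤ k := by
  intro k
  induction k with
  | zero =>
    intro a b h
    have : a = b := Fin.ext (by omega)
    subst this; simp
  | succ k ih =>
    intro a b h
    have hb := b.isLt
    have ha1 : a.val + 1 < n := by omega
    set a' : Fin n := ⟨a.val + 1, ha1⟩ with ha'
    have hadj : (pathGraph n).Adj a a' := by rw [pathGraph_adj]; left; rfl
    have h1 : (pathGraph n).dist a a' = 1 := SimpleGraph.dist_eq_one_iff_adj.2 hadj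
    have h2 : (pathGraph n).dist a' b ≤ k := ih a' b (by simp [ha']; omega)
    haveI : Nonempty (Fin n) := ⟨a⟩
    have hconn : (pathGraph n).Connected := ⟨pathGraph_preconnected n⟩
    calc (pathGraph n).dist a b ≤ (pathGraph n).dist a a' + (pathGraph n).dist a' b :=
          hconn.dist_triangle
      _ ≤ 1 + k := by omega
      _ = k + 1 := by omega

lemma pathGraph_dist (n : ℕ) (a b : Fin n) :
    (pathGraph n).dist a b = Nat.dist a.val b.val := by
  apply le_antisymm
  · rcases le_total a.val b.val with h | h
    · have := pathGraph_dist_le n (b.val - a.val) a b (by omega)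
      have hd : Nat.dist a.val b.val = b.val - a.val := by simp [Nat.dist]; omega
      omega
    · have := pathGraph_dist_le n (a.val - b.val) b a (by omega)
      rw [SimpleGraph.dist_comm]
      have hd : Nat.dist a.val b.val = a.val - b.val := by simp [Nat.dist]; omega
      omega
  · obtain ⟨w, hw⟩ := (pathGraph_preconnected n a b).exists_walk_length_eq_dist
    calc Nat.dist a.val b.val ≤ w.length := natdist_le_length_path w
      _ = _ := hw

lemma ladder_walk_lb {m : ℕ} {x y : Fin 2 × Fin m}
    (w : ((pathGraph 2).boxProd (pathGraph m)).Walk x y) :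
    Nat.dist x.1.val y.1.val + Nat.dist x.2.val y.2.val ≤ w.length := by
  induction w with
  | nil => simp [Nat.dist]
  | @cons u v c h p ih =>
    rw [SimpleGraph.boxProd_adj] at h
    simp only [SimpleGraph.Walk.length_cons]
    rcases h with ⟨h1, h2⟩ | ⟨h1, h2⟩
    · rw [pathGraph_adj] at h1
      have h2' : u.2.val = v.2.val := by rw [h2]
      simp only [Nat.dist] at ih ⊢
      omega
    · rw [pathGraph_adj] at h1
      have h1' : u.1.val = v.1.val := by rw [h2]
      simp only [Nat.dist] at ih ⊢
      omega

lemma ladder_dist {m : ℕ} (hm : 1 ≤ m) (x y : Fin 2 × Fin m) :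
    ((pathGraph 2).boxProd (pathGraph m)).dist x y
      = Nat.dist x.1.val y.1.val + Nat.dist x.2.val y.2.val := by
  apply le_antisymm
  · obtain ⟨p, hp⟩ := (pathGraph_preconnected 2 x.1 y.1).exists_walk_length_eq_dist
    obtain ⟨q, hq⟩ := (pathGraph_preconnected m x.2 y.2).exists_walk_length_eq_dist
    have hw := SimpleGraph.dist_le
      ((p.boxProdLeft (pathGraph m) x.2).append (q.boxProdRight (pathGraph 2) y.1))
    rw [SimpleGraph.Walk.length_append] at hw
    have l1 : (p.boxProdLeft (pathGraph m) x.2).length = p.length := by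
      simp [SimpleGraph.Walk.boxProdLeft, SimpleGraph.Walk.length_map]
      exact SimpleGraph.Walk.length_map _ _
    have l2 : (q.boxProdRight (pathGraph 2) y.1).length = q.length := by
      simp [SimpleGraph.Walk.boxProdRight, SimpleGraph.Walk.length_map]
      exact SimpleGraph.Walk.length_map _ _
    rw [l1, l2, hp, hq, pathGraph_dist, pathGraph_dist] at hw
    exact hw
  · have hconn : ((pathGraph 2).boxProd (pathGraph m)).Connected := by
      obtain ⟨m', rfl⟩ : ∃ m', m = m' + 1 := ⟨m - 1, by omega⟩
      exact (pathGraph_connected 1).boxProd (pathGraph_connected m')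
    obtain ⟨w, hw⟩ := (hconn.preconnected x y).exists_walk_length_eq_dist
    calc _ ≤ w.length := ladder_walk_lb w
      _ = _ := hw

lemma sum_f_dist (m c : ℕ) (hc : c < m) (f : ℕ → ℝ) :
    ∑ b ∈ Finset.range m, f (Nat.dist c b)
      = f 0 + (∑ i ∈ Finset.range c, f (i+1)) + ∑ i ∈ Finset.range (m-1-c), f (i+1) := by
  rw [Finset.range_eq_Ico, ← Finset.sum_Ico_consecutive (fun b => f (Nat.dist c b))
    (Nat.zero_le (c+1)) (by omega : c + 1 ≤ m)]
  have h1 : ∑ b ∈ Finset.Ico 0 (c+1), f (Nat.dist c b)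
      = f 0 + ∑ i ∈ Finset.range c, f (i+1) := by
    rw [← Finset.range_eq_Ico]
    have e1 : ∀ b ∈ Finset.range (c+1), f (Nat.dist c b) = (fun t => f (c - t)) b := by
      intro b hb
      simp only [Finset.mem_range] at hb
      have : Nat.dist c b = c - b := by simp [Nat.dist]; omega
      rw [this]
    rw [Finset.sum_congr rfl e1]
    have h3 := Finset.sum_range_reflect (fun t => f t) (c+1)
    simp only [Nat.add_sub_cancel] at h3
    rw [h3, Finset.sum_range_succ']
    ring
  have h2 : ∑ b ∈ Finset.Ico (c+1) m, f (Nat.dist c b)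
      = ∑ i ∈ Finset.range (m-1-c), f (i+1) := by
    rw [Finset.sum_Ico_eq_sum_range]
    have hm : m - (c+1) = m - 1 - c := by omega
    rw [hm]
    apply Finset.sum_congr rfl
    intro i _
    have : Nat.dist c (c + 1 + i) = i + 1 := by simp [Nat.dist]; omega
    rw [this]
  rw [h1, h2]

lemma harm_cast (n : ℕ) : ((harmonic n : ℚ) : ℝ) = ∑ i ∈ Finset.range n, (1:ℝ)/(i+1) := by
  rw [harmonic]
  push_cast
  simp [one_div]

lemma sum_shift (n : ℕ) : ∑ i ∈ Finset.range n, (1:ℝ)/(i+1+1) = (harmonic (n+1) : ℝ) - 1 := by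
  rw [harm_cast, Finset.sum_range_succ']
  have h : ∀ x ∈ Finset.range n, (1:ℝ)/(((x+1:ℕ):ℝ)+1) = (1:ℝ)/(x+1+1) := by
    intro x _; push_cast; ring_nf
  rw [Finset.sum_congr rfl h]
  norm_num

lemma harm_cast' (n : ℕ) :
    ∑ i ∈ Finset.range n, (1:ℝ)/((i+1 : ℕ):ℝ) = ((harmonic n : ℚ) : ℝ) := by
  rw [harm_cast]
  exact Finset.sum_congr rfl (fun i _ => by push_cast; ring)

lemma T0 (m c : ℕ) (hc : c < m) :
    ∑ b ∈ Finset.range m, (1:ℝ)/((Nat.dist c b : ℕ):ℝ)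
      = ((harmonic c : ℚ):ℝ) + ((harmonic (m-1-c) : ℚ):ℝ) := by
  rw [sum_f_dist m c hc (fun k => (1:ℝ)/((k:ℕ):ℝ))]
  simp only [Nat.cast_zero, div_zero, zero_add]
  rw [harm_cast', harm_cast']

lemma T1 (m c : ℕ) (hc : c < m) :
    ∑ b ∈ Finset.range m, (1:ℝ)/((1 + Nat.dist c b : ℕ):ℝ)
      = ((harmonic (c+1) : ℚ):ℝ) + ((harmonic (m-c) : ℚ):ℝ) - 1 := by
  rw [sum_f_dist m c hc (fun k => (1:ℝ)/((1+k:ℕ):ℝ))]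
  have e1 : ∀ n : ℕ, ∑ i ∈ Finset.range n, (1:ℝ)/((1+(i+1) : ℕ):ℝ)
      = (harmonic (n+1) : ℝ) - 1 := by
    intro n
    rw [← sum_shift n]
    exact Finset.sum_congr rfl (fun i _ => by push_cast; ring_nf)
  rw [e1, e1]
  have : m - 1 - c + 1 = m - c := by omega
  rw [this]
  norm_num
  ring

lemma row_sums (m c : ℕ) (hm : 2 ≤ m) (hc : c < m) (i : Fin 2) :
    ∑ x : Fin 2 × Fin m,
        (1:ℝ)/((((pathGraph 2).boxProd (pathGraph m)).dist (i, ⟨c, hc⟩) x : ℕ):ℝ)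
      = ((harmonic c : ℚ):ℝ) + ((harmonic (m-1-c) : ℚ):ℝ)
        + ((harmonic (c+1) : ℚ):ℝ) + ((harmonic (m-c) : ℚ):ℝ) - 1 := by
  rw [Fintype.sum_prod_type]
  rw [Fin.sum_univ_two]
  have hd : ∀ (a : Fin 2) (b : Fin m),
      ((pathGraph 2).boxProd (pathGraph m)).dist (i, ⟨c, hc⟩) (a, b)
        = Nat.dist i.val a.val + Nat.dist c b.val := fun a b => ladder_dist (by omega) _ _
  simp only [hd]
  have e01 : Nat.dist 0 1 = 1 := rfl
  have e10 : Nat.dist 1 0 = 1 := rfl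
  have hT0 := T0 m c hc
  have hT1 := T1 m c hc
  rw [← Fin.sum_univ_eq_sum_range (fun t => (1:ℝ)/((Nat.dist c t : ℕ):ℝ)) m] at hT0
  rw [← Fin.sum_univ_eq_sum_range (fun t => (1:ℝ)/((1 + Nat.dist c t : ℕ):ℝ)) m] at hT1
  fin_cases i <;>
    simp only [Fin.val_zero, Fin.val_one, Nat.dist_self, e01, e10, zero_add] <;>
    rw [hT0, hT1] <;> ring

/-- Theorem 3.1: harmonic centrality of vertices of the ladder `P₂ □ Pₘ`
(vertices are 1-indexed: vertex `v_j` of `Pₘ` is `⟨j-1, _⟩ : Fin m`). -/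
theorem harmonicCentrality_boxProd_path_path (m : ℕ) (hm : 2 ≤ m)
    (i : Fin 2) (j : ℕ) (hj1 : 1 ≤ j) (hjm : j ≤ m) :
    ((j = 1 ∨ j = m) →
      harmonicCentrality ((SimpleGraph.pathGraph 2).boxProd (SimpleGraph.pathGraph m))
        (i, ⟨j - 1, by omega⟩) =
      (1 / (2 * (m : ℝ) - 1)) * (2 * (harmonic (m - 1) : ℝ) + 1 / (m : ℝ))) ∧
    ((1 < j ∧ j < m) →
      harmonicCentrality ((SimpleGraph.pathGraph 2).boxProd (SimpleGraph.pathGraph m))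
        (i, ⟨j - 1, by omega⟩) =
      (1 / (2 * (m : ℝ) - 1)) *
        (2 * ((harmonic (j - 1) : ℝ) + (harmonic (m - j) : ℝ)) + 1 / (j : ℝ)
          + 1 / ((m : ℝ) - (j : ℝ) + 1) - 1)) := by
  have hc : j - 1 < m := by omega
  have hS : harmonicCentrality ((SimpleGraph.pathGraph 2).boxProd (SimpleGraph.pathGraph m))
        (i, ⟨j - 1, by omega⟩)
      = (((harmonic (j-1) : ℚ):ℝ) + ((harmonic (m-1-(j-1)) : ℚ):ℝ)
        + ((harmonic (j-1+1) : ℚ):ℝ) + ((harmonic (m-(j-1)) : ℚ):ℝ) - 1) / (2*(m:ℝ) - 1) := by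
    rw [harmonicCentrality]
    rw [Finset.sum_erase (f := fun x => (1:ℝ)/((((SimpleGraph.pathGraph 2).boxProd
        (SimpleGraph.pathGraph m)).dist (i, (⟨j - 1, by omega⟩ : Fin m)) x : ℕ):ℝ))
        Finset.univ (by simp)]
    rw [row_sums m (j-1) hm hc i]
    have hcard : (Fintype.card (Fin 2 × Fin m)) = 2 * m := by simp
    rw [hcard]
    push_cast
    ring_nf
  constructor
  · rintro (rfl | rfl)
    · rw [hS, one_div_mul_eq_div]
      congr 1
      have hmm : m - 1 + 1 = m := by omega
      have hsucc := harmonic_succ (m-1)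
      rw [hmm] at hsucc
      norm_num
      rw [hsucc]
      push_cast
      ring
    · rw [hS, one_div_mul_eq_div]
      congr 1
      have hmm : j - 1 + 1 = j := by omega
      have h1 : j - 1 - (j - 1) = 0 := by omega
      have h2 : j - (j - 1) = 1 := by omega
      rw [h1, h2, hmm]
      have hsucc := harmonic_succ (j-1)
      rw [hmm] at hsucc
      rw [hsucc]
      norm_num [harmonic_succ]
      push_cast
      ring
  · rintro ⟨hj1', hjm'⟩
    rw [hS, one_div_mul_eq_div]
    congr 1
    have h1 : m - 1 - (j - 1) = m - j := by omega
    have h2 : j - 1 + 1 = j := by omega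
    have h3 : m - (j - 1) = m - j + 1 := by omega
    rw [h1, h2, h3]
    have hs1 := harmonic_succ (j-1)
    rw [h2] at hs1
    have hs2 := harmonic_succ (m-j)
    rw [hs1, hs2]
    have hcast : ((m - j : ℕ) : ℝ) = (m:ℝ) - (j:ℝ) := by
      push_cast [Nat.cast_sub hjm]
      ring
    push_cast [hcast]
    ring
end

section
/- Let m ≥ 4 be even and let L_m = P_2 □ P_m be the Cartesian product of the path P_2 with the path P_m (a graph of order 2m). Then the harmonic centralization of L_m equals (2/((2m-1)(m-1)))·[ 4(m-2)·H_{m/2} - 4·H_{m-1} - (m^2-2)/m + (2m-4)/(m+2) - 2·Σ_{j=2}^{(m-2)/2} ( 2·H_{j-1} + 2·H_{m-j} + (1-j)/j + 1/(m-j+1) ) ], where H_n denotes the n-th harmonic number. -/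
open SimpleGraph Finset

noncomputable def hr (n : ℕ) : ℝ := (harmonic n : ℝ)
lemma hr_eq (n : ℕ) : ((harmonic n : ℚ) : ℝ) = hr n := rfl
lemma hr_zero : hr 0 = 0 := by simp [hr]
lemma hr_def (n : ℕ) : hr n = ∑ k ∈ Finset.range n, 1 / ((k : ℝ) + 1) := by
  unfold hr harmonic; push_cast; simp [one_div]
lemma hr_succ (n : ℕ) : hr (n + 1) = hr n + 1 / ((n : ℝ) + 1) := by
  unfold hr; rw [harmonic_succ]; push_cast; ring
lemma sum_hr (p : ℕ) : ∑ k ∈ Finset.range p, hr k = p * hr p - p := by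
  induction p with
  | zero => simp [hr]
  | succ p ih =>
    rw [Finset.sum_range_succ, ih, hr_succ]
    push_cast
    have hp : ((p : ℝ) + 1) ≠ 0 := by positivity
    field_simp
    ring
noncomputable def Fv (m i : ℕ) : ℝ := hr i + hr (m - 1 - i) + hr (i + 1) + hr (m - i) - 1

lemma sum_hr_Ico (a b : ℕ) (h : a ≤ b) :
    ∑ k ∈ Finset.range (b - a), hr (a + k) = ((b:ℝ) * hr b - b) - ((a:ℝ) * hr a - a) := by
  rw [← Finset.sum_Ico_eq_sum_range, Finset.sum_Ico_eq_sub _ h, sum_hr, sum_hr]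

lemma hr_sub (a b : ℕ) (h : a ≤ b) :
    hr b - hr a = ∑ k ∈ Finset.range (b - a), 1 / ((a:ℝ) + k + 1) := by
  rw [hr_def, hr_def, ← Finset.sum_Ico_eq_sub _ h, Finset.sum_Ico_eq_sum_range]
  apply Finset.sum_congr rfl; intro k _; push_cast; ring_nf

lemma sum_hr_shift (q : ℕ) : ∑ k ∈ Finset.range q, hr (k+1)
    = ((q:ℝ)+1) * hr (q+1) - ((q:ℝ)+1) := by
  have h := Finset.sum_range_succ' (fun k => hr k) q
  rw [sum_hr, hr_zero, add_zero] at h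
  rw [← h]; push_cast; ring

lemma sum_inv_shift (q : ℕ) : ∑ k ∈ Finset.range q, 1 / ((k:ℝ)+2) = hr (q+1) - 1 := by
  have h := Finset.sum_range_succ' (fun k => 1 / ((k:ℝ)+1)) q
  rw [← hr_def] at h
  rw [h]
  push_cast
  norm_num
  apply Finset.sum_congr rfl; intro k _; ring_nf

lemma sum_F (m : ℕ) :
    ∑ i ∈ Finset.range m, Fv m i = (4*(m:ℝ)+2) * hr m - 5*m := by
  unfold Fv
  rw [Finset.sum_sub_distrib, Finset.sum_add_distrib, Finset.sum_add_distrib,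
    Finset.sum_add_distrib]
  have t1 : ∑ i ∈ Finset.range m, hr i = (m:ℝ) * hr m - m := sum_hr m
  have t2 : ∑ i ∈ Finset.range m, hr (m - 1 - i) = (m:ℝ) * hr m - m := by
    rw [Finset.sum_range_reflect (fun i => hr i) m]; exact sum_hr m
  have t3 : ∑ i ∈ Finset.range m, hr (i + 1) = ((m:ℝ)+1) * hr m - m := by
    rw [sum_hr_shift, hr_succ]
    have hm1 : ((m:ℝ) + 1) ≠ 0 := by positivity
    field_simp
    ring
  have t4 : ∑ i ∈ Finset.range m, hr (m - i) = ((m:ℝ)+1) * hr m - m := by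
    rw [← Finset.sum_range_reflect (fun i => hr (m - i)) m, ← t3]
    apply Finset.sum_congr rfl
    intro k hk
    rw [Finset.mem_range] at hk
    congr 1
    omega
  rw [t1, t2, t3, t4, Finset.sum_const, Finset.card_range]
  push_cast
  ring

lemma Tsum (p : ℕ) :
    ∑ j ∈ Finset.Icc 2 (p+1),
      (2 * hr (j - 1) + 2 * hr (2*p+4 - j) + (1 - (j : ℝ)) / (j : ℝ)
        + 1 / ((2*(p:ℝ)+4) - (j : ℝ) + 1))
    = 2 * (((p:ℝ)+1) * hr (p+1) - ((p:ℝ)+1))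
      + 2 * (((2*(p:ℝ)+3) * hr (2*p+3) - (2*(p:ℝ)+3))
          - (((p:ℝ)+3) * hr (p+3) - ((p:ℝ)+3)))
      + (hr (p+1) - 1 - p)
      + (hr (2*p+3) - hr (p+3)) := by
  rw [show Finset.Icc 2 (p+1) = Finset.Ico 2 (p+2) from (Finset.Ico_add_one_right_eq_Icc 2 (p+1)).symm,
    Finset.sum_Ico_eq_sum_range, show p + 2 - 2 = p from by omega]
  have hcong : ∀ k ∈ Finset.range p,
      2 * hr (2 + k - 1) + 2 * hr (2*p+4 - (2+k)) + (1 - ((2+k : ℕ) : ℝ)) / ((2+k : ℕ) : ℝ)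
        + 1 / ((2*(p:ℝ)+4) - ((2+k : ℕ) : ℝ) + 1)
      = 2 * hr (k+1) + 2 * hr (2*p+2 - k) + (1 / ((k:ℝ)+2) - 1)
        + 1 / (((2*p+3-k : ℕ)) : ℝ) := by
    intro k hk
    rw [Finset.mem_range] at hk
    rw [show 2 + k - 1 = k + 1 from by omega, show 2*p+4 - (2+k) = 2*p+2-k from by omega]
    have h1 : ((2+k : ℕ) : ℝ) = (k:ℝ) + 2 := by push_cast; ring
    have h2 : (((2*p+3-k : ℕ)) : ℝ) = (2*(p:ℝ)+4) - ((k:ℝ)+2) + 1 := by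
      have : (k:ℝ) ≤ 2*p+3 := by
        have : (k:ℝ) ≤ p := by exact_mod_cast hk.le
        linarith
      push_cast [Nat.cast_sub (by omega : k ≤ 2*p+3)]
      ring
    rw [h1, h2]
    have hk2 : ((k:ℝ)+2) ≠ 0 := by positivity
    congr 1
    congr 1
    field_simp
  rw [Finset.sum_congr rfl hcong]
  rw [Finset.sum_add_distrib, Finset.sum_add_distrib, Finset.sum_add_distrib]
  have t1 : ∑ k ∈ Finset.range p, 2 * hr (k+1) = 2 * (((p:ℝ)+1) * hr (p+1) - ((p:ℝ)+1)) := by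
    rw [← Finset.mul_sum, sum_hr_shift]
  have t2 : ∑ k ∈ Finset.range p, 2 * hr (2*p+2 - k)
      = 2 * (((2*(p:ℝ)+3) * hr (2*p+3) - (2*(p:ℝ)+3)) - (((p:ℝ)+3) * hr (p+3) - ((p:ℝ)+3))) := by
    rw [← Finset.mul_sum]
    congr 1
    rw [← Finset.sum_range_reflect (fun k => hr (2*p+2 - k)) p]
    have := sum_hr_Ico (p+3) (2*p+3) (by omega)
    rw [show 2*p+3 - (p+3) = p from by omega] at this
    push_cast at this
    rw [← this]
    apply Finset.sum_congr rfl
    intro k hk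
    rw [Finset.mem_range] at hk
    congr 1
    omega
  have t3 : ∑ k ∈ Finset.range p, (1 / ((k:ℝ)+2) - 1) = hr (p+1) - 1 - p := by
    rw [Finset.sum_sub_distrib, sum_inv_shift, Finset.sum_const, Finset.card_range]
    push_cast; ring
  have t4 : ∑ k ∈ Finset.range p, 1 / (((2*p+3-k : ℕ)) : ℝ) = hr (2*p+3) - hr (p+3) := by
    rw [← Finset.sum_range_reflect (fun k => 1 / (((2*p+3-k : ℕ)) : ℝ)) p]
    rw [hr_sub (p+3) (2*p+3) (by omega), show 2*p+3 - (p+3) = p from by omega]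
    apply Finset.sum_congr rfl
    intro k hk
    rw [Finset.mem_range] at hk
    rw [show 2*p+3 - (p - 1 - k) = p+4+k from by omega]
    push_cast
    ring_nf
  rw [t1, t2, t3, t4]


lemma pathGraph_walk_of_add (n : ℕ) : ∀ (k : ℕ) (u v : Fin n), u.val + k = v.val →
    ∃ w : (SimpleGraph.pathGraph n).Walk u v, w.length = k := by
  intro k
  induction k with
  | zero => intro u v h; have : u = v := Fin.ext (by omega); subst this; exact ⟨.nil, rfl⟩
  | succ k ih =>
    intro u v h
    have hlt : u.val + 1 < n := by omega
    have hadj : (pathGraph n).Adj u ⟨u.val + 1, hlt⟩ := pathGraph_adj.2 (Or.inl rfl)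
    obtain ⟨w, hw⟩ := ih ⟨u.val + 1, hlt⟩ v (by simp; omega)
    exact ⟨.cons hadj w, by simp [hw]⟩

lemma pathGraph_exists_walk (n : ℕ) (u v : Fin n) :
    ∃ w : (SimpleGraph.pathGraph n).Walk u v, w.length = Nat.dist u.val v.val := by
  rcases le_total u.val v.val with h | h
  · obtain ⟨w, hw⟩ := pathGraph_walk_of_add n (v.val - u.val) u v (by omega)
    exact ⟨w, by rw [hw, Nat.dist_eq_sub_of_le h]⟩
  · obtain ⟨w, hw⟩ := pathGraph_walk_of_add n (u.val - v.val) v u (by omega)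
    exact ⟨w.reverse, by rw [Walk.length_reverse, hw, Nat.dist_eq_sub_of_le_right h]⟩

lemma walk_length_ge {V : Type*} {G : SimpleGraph V} (f : V → ℕ)
    (hf : ∀ a b, G.Adj a b → f a ≤ f b + 1) :
    ∀ {u v : V} (w : G.Walk u v), f u ≤ f v + w.length := by
  intro u v w
  induction w with
  | nil => simp
  | @cons a b c h p ih =>
    have := hf a b h
    simp only [Walk.length_cons]
    omega

lemma ladder_dist_s4 {m : ℕ} (hm : 0 < m) (u v : Fin 2 × Fin m) :
    ((SimpleGraph.pathGraph 2).boxProd (SimpleGraph.pathGraph m)).dist u v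
      = Nat.dist u.1.val v.1.val + Nat.dist u.2.val v.2.val := by
  obtain ⟨a, i⟩ := u
  obtain ⟨b, j⟩ := v
  apply le_antisymm
  · obtain ⟨w1, h1⟩ := pathGraph_exists_walk 2 a b
    obtain ⟨w2, h2⟩ := pathGraph_exists_walk m i j
    have := SimpleGraph.dist_le ((w1.boxProdLeft (pathGraph m) i).append
      (Walk.boxProdRight (pathGraph 2) b w2))
    rw [Walk.length_append, show (w1.boxProdLeft (pathGraph m) i).length = w1.length from
      Walk.length_map _ _, show (Walk.boxProdRight (pathGraph 2) b w2).length = w2.length from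
      Walk.length_map _ _] at this
    simpa [Walk.length_append, Walk.boxProdLeft, Walk.boxProdRight, Walk.length_map, h1, h2] using this
  · have hconn : ((pathGraph 2).boxProd (pathGraph m)).Connected := by
      obtain ⟨m', rfl⟩ : ∃ m', m = m' + 1 := ⟨m - 1, by omega⟩
      exact (pathGraph_connected 1).boxProd (pathGraph_connected m')
    obtain ⟨w, hw⟩ := (hconn (a, i) (b, j)).exists_walk_length_eq_dist
    have key := walk_length_ge (G := (pathGraph 2).boxProd (pathGraph m))
      (fun x => Nat.dist x.1.val b.val + Nat.dist x.2.val j.val) ?_ w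
    · simpa [hw, Nat.dist_self] using key
    · rintro x y hxy
      rcases SimpleGraph.boxProd_adj.1 hxy with ⟨h1, h2⟩ | ⟨h1, h2⟩
      · have h2' : (x.2 : ℕ) = (y.2 : ℕ) := congrArg Fin.val h2
        rcases pathGraph_adj.1 h1 with h | h <;> (simp only [Nat.dist]; omega)
      · have h2' : (x.1 : ℕ) = (y.1 : ℕ) := congrArg Fin.val h2
        rcases pathGraph_adj.1 h1 with h | h <;> (simp only [Nat.dist]; omega)

lemma rowA {m i : ℕ} (hi : i < m) :
    ∑ j ∈ Finset.range m, (1 : ℝ) / (Nat.dist i j) = hr i + hr (m - 1 - i) := by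
  rw [Finset.range_eq_Ico, ← Finset.sum_Ico_consecutive _ (Nat.zero_le (i+1)) hi,
    ← Finset.range_eq_Ico]
  have e1 : ∑ j ∈ Finset.range (i+1), (1 : ℝ) / (Nat.dist i j) = hr i := by
    rw [← Finset.sum_range_reflect (fun j => (1 : ℝ) / (Nat.dist i j)) (i+1),
      Finset.sum_range_succ']
    have h0 : (1 : ℝ) / (Nat.dist i (i + 1 - 1 - 0)) = 0 := by
      simp [Nat.dist_self]
    rw [h0, add_zero, hr_def]
    apply Finset.sum_congr rfl
    intro k hk
    rw [Finset.mem_range] at hk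
    have : Nat.dist i (i + 1 - 1 - (k + 1)) = k + 1 := by
      simp only [Nat.dist]; omega
    rw [this]; push_cast; ring_nf
  have e2 : ∑ j ∈ Finset.Ico (i+1) m, (1 : ℝ) / (Nat.dist i j) = hr (m - 1 - i) := by
    rw [Finset.sum_Ico_eq_sum_range, hr_def]
    have : m - (i + 1) = m - 1 - i := by omega
    rw [this]
    apply Finset.sum_congr rfl
    intro k _
    have : Nat.dist i (i + 1 + k) = k + 1 := by simp only [Nat.dist]; omega
    rw [this]; push_cast; ring_nf
  rw [e1, e2]

lemma rowB {m i : ℕ} (hi : i < m) :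
    ∑ j ∈ Finset.range m, (1 : ℝ) / (1 + Nat.dist i j) = hr (i + 1) + hr (m - i) - 1 := by
  rw [Finset.range_eq_Ico, ← Finset.sum_Ico_consecutive _ (Nat.zero_le (i+1)) hi,
    ← Finset.range_eq_Ico]
  have e1 : ∑ j ∈ Finset.range (i+1), (1 : ℝ) / (1 + Nat.dist i j) = hr (i + 1) := by
    rw [← Finset.sum_range_reflect (fun j => (1 : ℝ) / (1 + Nat.dist i j)) (i+1), hr_def]
    apply Finset.sum_congr rfl
    intro k hk
    rw [Finset.mem_range] at hk
    have : Nat.dist i (i + 1 - 1 - k) = k := by simp only [Nat.dist]; omega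
    rw [this]; push_cast; ring_nf
  have e2 : ∑ j ∈ Finset.Ico (i+1) m, (1 : ℝ) / (1 + Nat.dist i j) = hr (m - i) - 1 := by
    rw [Finset.sum_Ico_eq_sum_range]
    obtain ⟨p, hp⟩ : ∃ p, m - i = p + 1 := ⟨m - i - 1, by omega⟩
    have hmi : m - (i + 1) = p := by omega
    rw [hp, hmi, hr_def, Finset.sum_range_succ']
    have hterm : ∀ k ∈ Finset.range p,
        (1 : ℝ) / (1 + (Nat.dist i (i + 1 + k) : ℝ)) = 1 / ((((k+1) : ℕ) : ℝ) + 1) := by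
      intro k _
      have : Nat.dist i (i + 1 + k) = k + 1 := by simp only [Nat.dist]; omega
      rw [this]; push_cast; ring_nf
    rw [Finset.sum_congr rfl hterm]
    norm_num
  rw [e1, e2]; ring

lemma HC_eq {m : ℕ} (hm : 0 < m) (u : Fin 2 × Fin m) :
    harmonicCentrality ((SimpleGraph.pathGraph 2).boxProd (SimpleGraph.pathGraph m)) u
      = Fv m u.2.val / (2 * m - 1) := by
  obtain ⟨a, i⟩ := u
  unfold harmonicCentrality
  have hcard : (Fintype.card (Fin 2 × Fin m) : ℝ) = 2 * m := by
    simp [Fintype.card_prod]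
  rw [hcard]
  congr 1
  have hz : (1 : ℝ) / (((SimpleGraph.pathGraph 2).boxProd (SimpleGraph.pathGraph m)).dist (a,i) (a,i)) = 0 := by
    simp [SimpleGraph.dist_self]
  rw [Finset.sum_erase (f := fun x => (1 : ℝ) /
      (((SimpleGraph.pathGraph 2).boxProd (SimpleGraph.pathGraph m)).dist (a,i) x : ℕ))
    Finset.univ hz, Fintype.sum_prod_type]
  have hdist : ∀ (b : Fin 2) (j : Fin m),
      ((SimpleGraph.pathGraph 2).boxProd (SimpleGraph.pathGraph m)).dist (a,i) (b,j)
        = Nat.dist a.val b.val + Nat.dist i.val j.val := fun b j => ladder_dist_s4 hm (a,i) (b,j)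
  have hswap : ∀ b : Fin 2, ∑ j : Fin m,
      (1 : ℝ) / (((SimpleGraph.pathGraph 2).boxProd (SimpleGraph.pathGraph m)).dist (a,i) (b,j))
      = ∑ j ∈ Finset.range m, (1 : ℝ) / (Nat.dist a.val b.val + Nat.dist i.val j) := by
    intro b
    rw [← Fin.sum_univ_eq_sum_range (fun j => (1:ℝ)/(Nat.dist a.val b.val + Nat.dist i.val j)) m]
    exact Finset.sum_congr rfl fun j _ => by rw [hdist b j]; push_cast; ring_nf
  rw [Fin.sum_univ_two, hswap 0, hswap 1]
  have hi : i.val < m := i.isLt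
  fin_cases a <;>
    simp only [Fin.val_zero, Fin.val_one, Fin.isValue,
      show Nat.dist 0 0 = 0 from rfl, show Nat.dist 0 1 = 1 from rfl,
      show Nat.dist 1 0 = 1 from rfl, show Nat.dist 1 1 = 0 from rfl,
      Nat.cast_zero, Nat.cast_one, zero_add] <;>
    rw [rowA hi, rowB hi] <;> (unfold Fv; ring)

lemma Gstep (a c : ℕ) (h : a ≤ c) :
    hr a + hr (c+1) + hr (a+1) + hr (c+2) ≤ hr (a+1) + hr c + hr (a+2) + hr (c+1) := by
  have h1 : (1:ℝ)/((c:ℝ)+1) ≤ 1/((a:ℝ)+1) := by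
    apply one_div_le_one_div_of_le (by positivity)
    have : (a:ℝ) ≤ c := by exact_mod_cast h
    linarith
  have h2 : (1:ℝ)/((c:ℝ)+1+1) ≤ 1/((a:ℝ)+1+1) := by
    apply one_div_le_one_div_of_le (by positivity)
    have : (a:ℝ) ≤ c := by exact_mod_cast h
    linarith
  simp only [show a+2 = (a+1)+1 from rfl, show c+2 = (c+1)+1 from rfl, hr_succ]
  push_cast
  linarith

lemma Fv_up (n : ℕ) (hn : 2 ≤ n) : ∀ d a, a + d = n - 1 → Fv (2*n) a ≤ Fv (2*n) (n-1) := by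
  intro d
  induction d with
  | zero => intro a ha; have : a = n - 1 := by omega
            subst this; exact le_refl _
  | succ d ih =>
    intro a ha
    have h1 : Fv (2*n) a ≤ Fv (2*n) (a+1) := by
      have e1 : 2*n - 1 - a = (2*n-2-a) + 1 := by omega
      have e2 : 2*n - a = (2*n-2-a) + 2 := by omega
      have e3 : 2*n - 1 - (a+1) = 2*n-2-a := by omega
      have e4 : 2*n - (a+1) = (2*n-2-a) + 1 := by omega
      unfold Fv
      rw [e1, e2, e3, e4]
      have := Gstep a (2*n-2-a) (by omega)
      linarith
    exact h1.trans (ih (a+1) (by omega))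

lemma Fv_symm (n i : ℕ) (hn : 1 ≤ n) (hi : i < 2*n) : Fv (2*n) (2*n-1-i) = Fv (2*n) i := by
  unfold Fv
  have e1 : 2*n - 1 - (2*n-1-i) = i := by omega
  have e2 : 2*n - (2*n-1-i) = i + 1 := by omega
  have e3 : 2*n - 1 - i + 1 = 2*n - i := by omega
  rw [e1, e2, e3]
  ring

lemma Fv_le (n : ℕ) (hn : 2 ≤ n) (i : ℕ) (hi : i < 2*n) :
    Fv (2*n) i ≤ Fv (2*n) (n-1) := by
  rcases le_or_gt i (n-1) with h | h
  · exact Fv_up n hn (n-1-i) i (by omega) 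
  · rw [← Fv_symm n i (by omega) hi]
    exact Fv_up n hn (n-1-(2*n-1-i)) (2*n-1-i) (by omega)

/-- Theorem 3.4 (even case): harmonic centralization of the ladder `P₂ □ Pₘ` for even `m`. -/
theorem harmonicCentralization_boxProd_path_path_even (m : ℕ) (hm : 4 ≤ m) (heven : Even m) :
    harmonicCentralization ((SimpleGraph.pathGraph 2).boxProd (SimpleGraph.pathGraph m)) =
      (2 / ((2 * (m : ℝ) - 1) * ((m : ℝ) - 1))) *
        (4 * ((m : ℝ) - 2) * (harmonic (m / 2) : ℝ) - 4 * (harmonic (m - 1) : ℝ)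
          - ((m : ℝ) ^ 2 - 2) / (m : ℝ) + (2 * (m : ℝ) - 4) / ((m : ℝ) + 2)
          - 2 * ∑ j ∈ Finset.Icc 2 ((m - 2) / 2),
              (2 * (harmonic (j - 1) : ℝ) + 2 * (harmonic (m - j) : ℝ)
                + (1 - (j : ℝ)) / (j : ℝ) + 1 / ((m : ℝ) - (j : ℝ) + 1))) := by
  obtain ⟨n, rfl⟩ := heven
  obtain ⟨p, rfl⟩ : ∃ p, n = p + 2 := ⟨n - 2, by omega⟩
  rw [show (p+2)+(p+2) = 2*p+4 from by ring] at *
  have hm4 : 0 < 2*p+4 := by omega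
  have hcard : Fintype.card (Fin 2 × Fin (2*p+4)) = 2*(2*p+4) := by simp
  have hne : Nonempty (Fin 2 × Fin (2*p+4)) := ⟨(0, ⟨0, by omega⟩)⟩
  have hDpos : (0:ℝ) < 2 * ((2*p+4 : ℕ) : ℝ) - 1 := by
    have : (0:ℝ) ≤ (p:ℝ) := Nat.cast_nonneg p
    push_cast; linarith
  have hFle : ∀ i : ℕ, i < 2*p+4 → Fv (2*p+4) i ≤ Fv (2*p+4) (p+1) := by
    intro i hi
    have h := Fv_le (p+2) (by omega) i (by omega : i < 2*(p+2))
    rw [show 2*(p+2) = 2*p+4 from by ring, show p+2-1 = p+1 from rfl] at h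
    exact h
  have hsup : (⨆ v : Fin 2 × Fin (2*p+4),
        harmonicCentrality ((SimpleGraph.pathGraph 2).boxProd (SimpleGraph.pathGraph (2*p+4))) v)
      = Fv (2*p+4) (p+1) / (2 * ((2*p+4 : ℕ) : ℝ) - 1) := by
    apply le_antisymm
    · apply ciSup_le
      intro v
      rw [HC_eq hm4 v]
      exact div_le_div_of_nonneg_right (hFle v.2.val v.2.isLt) hDpos.le
    · have h := le_ciSup (f := fun v : Fin 2 × Fin (2*p+4) =>
          harmonicCentrality ((SimpleGraph.pathGraph 2).boxProd (SimpleGraph.pathGraph (2*p+4))) v)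
        (Set.Finite.bddAbove (Set.finite_range _)) ((0 : Fin 2), (⟨p+1, by omega⟩ : Fin (2*p+4)))
      rw [HC_eq hm4] at h
      exact h
  have hsum : ∑ u : Fin 2 × Fin (2*p+4),
      harmonicCentrality ((SimpleGraph.pathGraph 2).boxProd (SimpleGraph.pathGraph (2*p+4))) u
      = 2 * (((4*((2*p+4:ℕ):ℝ)+2) * hr (2*p+4) - 5*((2*p+4:ℕ):ℝ)) / (2*((2*p+4:ℕ):ℝ)-1)) := by
    rw [Fintype.sum_prod_type]
    have hrow : ∀ a : Fin 2, ∑ i : Fin (2*p+4),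
        harmonicCentrality ((SimpleGraph.pathGraph 2).boxProd (SimpleGraph.pathGraph (2*p+4))) (a, i)
        = ((4*((2*p+4:ℕ):ℝ)+2) * hr (2*p+4) - 5*((2*p+4:ℕ):ℝ)) / (2*((2*p+4:ℕ):ℝ)-1) := by
      intro a
      have step : ∀ i : Fin (2*p+4),
          harmonicCentrality ((SimpleGraph.pathGraph 2).boxProd (SimpleGraph.pathGraph (2*p+4))) (a, i)
          = Fv (2*p+4) i.val / (2*((2*p+4:ℕ):ℝ)-1) := fun i => HC_eq hm4 (a, i)
      rw [Finset.sum_congr rfl (fun i _ => step i),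
        Fin.sum_univ_eq_sum_range (fun i => Fv (2*p+4) i / (2*((2*p+4:ℕ):ℝ)-1)) (2*p+4),
        ← Finset.sum_div, sum_F]
    rw [Fin.sum_univ_two, hrow 0, hrow 1]
    ring
  have hFc : Fv (2*p+4) (p+1) = hr (p+1) + hr (p+2) + hr (p+2) + hr (p+3) - 1 := by
    unfold Fv
    rw [show 2*p+4-1-(p+1) = p+2 from by omega, show 2*p+4-(p+1) = p+3 from by omega]
  unfold harmonicCentralization
  rw [hsup, Finset.sum_sub_distrib, Finset.sum_const, Finset.card_univ, hcard, hsum, hFc]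
  have hT : ∑ j ∈ Finset.Icc 2 (p+1),
      (2 * hr (j-1) + 2 * hr (2*p+4-j) + (1 - (j:ℝ))/(j:ℝ)
        + 1/(((2*p+4:ℕ):ℝ) - (j:ℝ) + 1))
      = 2 * (((p:ℝ)+1) * hr (p+1) - ((p:ℝ)+1))
      + 2 * (((2*(p:ℝ)+3) * hr (2*p+3) - (2*(p:ℝ)+3))
          - (((p:ℝ)+3) * hr (p+3) - ((p:ℝ)+3)))
      + (hr (p+1) - 1 - p)
      + (hr (2*p+3) - hr (p+3)) := by
    rw [← Tsum p]
    apply Finset.sum_congr rfl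
    intro j hj
    have hc : ((2*p+4 : ℕ):ℝ) = 2*(p:ℝ)+4 := by push_cast; ring
    rw [hc]
  simp only [show (2*p+4)/2 = p+2 from by omega, show 2*p+4-1 = 2*p+3 from by omega,
    show (2*p+4-2)/2 = p+1 from by omega, hr_eq]
  rw [hT]
  have e1 : hr (p+2) = hr (p+1) + 1/((p:ℝ)+2) := by
    rw [show p+2 = (p+1)+1 from rfl, hr_succ]; push_cast; ring
  have e2 : hr (p+3) = hr (p+2) + 1/((p:ℝ)+3) := by
    rw [show p+3 = (p+2)+1 from rfl, hr_succ]; push_cast; ring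
  have e3 : hr (2*p+4) = hr (2*p+3) + 1/(2*(p:ℝ)+4) := by
    rw [show 2*p+4 = (2*p+3)+1 from by ring, hr_succ]; push_cast; ring
  rw [e3, e2, e1, nsmul_eq_mul]
  push_cast
  have hx : (0:ℝ) ≤ (p:ℝ) := Nat.cast_nonneg p
  have d1 : (p:ℝ) + 2 ≠ 0 := by linarith
  have d2 : (p:ℝ) + 3 ≠ 0 := by linarith
  have d3 : 2*(p:ℝ) + 4 ≠ 0 := by linarith
  have d4 : 2*(2*(p:ℝ)+4) - 1 ≠ 0 := by linarith
  have d5 : 2*(2*(p:ℝ)+4) - 2 ≠ 0 := by linarith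
  have d6 : 2*(p:ℝ)+4 - 1 ≠ 0 := by linarith
  have d7 : 2*(p:ℝ)+4+2 ≠ 0 := by linarith
  field_simp
  ring
end

section
/- Let m ≥ 3 be odd and let P_2 × P_m be the direct (tensor) product of the path P_2 with the path P_m (a graph of order 2m). Then the harmonic centralization of P_2 × P_m equals 4·( (m-1)·H_{(m-1)/2} - H_{m-1} - Σ_{j=2}^{(m-1)/2} ( H_{j-1} + H_{m-j} ) ) / ( (m-1)(2m-1) ), where H_n denotes the n-th harmonic number. -/
open SimpleGraph Finset

private lemma tp_adj {m : ℕ} {x y : Fin 2 × Fin m} :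
    (tensorProd (SimpleGraph.pathGraph 2) (SimpleGraph.pathGraph m)).Adj x y ↔
      ((x.1.val + 1 = y.1.val ∨ y.1.val + 1 = x.1.val) ∧
       (x.2.val + 1 = y.2.val ∨ y.2.val + 1 = x.2.val)) := by
  show (SimpleGraph.pathGraph 2).Adj x.1 y.1 ∧ (SimpleGraph.pathGraph m).Adj x.2 y.2 ↔ _
  rw [pathGraph_adj, pathGraph_adj]

private lemma parity_of_reachable {m : ℕ} {x y : Fin 2 × Fin m}
    (h : (tensorProd (SimpleGraph.pathGraph 2) (SimpleGraph.pathGraph m)).Reachable x y) :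
    (x.1.val + x.2.val) % 2 = (y.1.val + y.2.val) % 2 := by
  obtain ⟨w⟩ := h
  induction w with
  | nil => rfl
  | cons h w ih => rw [← ih]; rw [tp_adj] at h; omega

private lemma dist_lower {m : ℕ} {x y : Fin 2 × Fin m}
    (w : (tensorProd (SimpleGraph.pathGraph 2) (SimpleGraph.pathGraph m)).Walk x y) :
    Nat.dist x.2.val y.2.val ≤ w.length := by
  induction w with
  | nil => simp [Nat.dist_self]
  | cons h w ih =>
    rw [SimpleGraph.Walk.length_cons]
    rw [tp_adj] at h
    simp only [Nat.dist] at ih ⊢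
    omega

private lemma exists_walk {m : ℕ} : ∀ (n : ℕ) (x y : Fin 2 × Fin m),
    Nat.dist x.2.val y.2.val = n →
    (x.1.val + x.2.val) % 2 = (y.1.val + y.2.val) % 2 →
    ∃ w : (tensorProd (SimpleGraph.pathGraph 2) (SimpleGraph.pathGraph m)).Walk x y,
      w.length = n := by
  intro n
  induction n with
  | zero =>
    intro x y hd hp
    have h1 := x.1.2; have h2 := y.1.2
    simp only [Nat.dist] at hd
    have hxy : x = y := by
      have : x.2 = y.2 := Fin.ext (by omega)
      have : x.1 = y.1 := Fin.ext (by omega)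
      exact Prod.ext ‹x.1 = y.1› ‹x.2 = y.2›
    exact hxy ▸ ⟨SimpleGraph.Walk.nil, rfl⟩
  | succ n ih =>
    intro x y hd hp
    have h1 := x.1.2
    have h2 := x.2.2
    have h3 := y.2.2
    simp only [Nat.dist] at hd
    rcases Nat.lt_or_ge x.2.val y.2.val with hlt | hge
    · set z : Fin 2 × Fin m := (⟨1 - x.1.val, by omega⟩, ⟨x.2.val + 1, by omega⟩) with hz
      have hadj : (tensorProd (SimpleGraph.pathGraph 2) (SimpleGraph.pathGraph m)).Adj x z := by
        rw [tp_adj]; simp only [hz, Fin.val_mk]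
        refine ⟨by omega, ?_⟩
        first | exact Or.inl trivial | omega
      obtain ⟨w, hw⟩ := ih z y (by simp only [Nat.dist, hz, Fin.val_mk]; omega)
        (by simp only [hz, Fin.val_mk]; omega)
      exact ⟨SimpleGraph.Walk.cons hadj w, by simp [hw]⟩
    · have hlt : y.2.val < x.2.val := by omega
      set z : Fin 2 × Fin m := (⟨1 - x.1.val, by omega⟩, ⟨x.2.val - 1, by omega⟩) with hz
      have hadj : (tensorProd (SimpleGraph.pathGraph 2) (SimpleGraph.pathGraph m)).Adj x z := by
        rw [tp_adj]; simp only [hz, Fin.val_mk]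
        refine ⟨by omega, ?_⟩
        first | exact Or.inl trivial | omega
      obtain ⟨w, hw⟩ := ih z y (by simp only [Nat.dist, hz, Fin.val_mk]; omega)
        (by simp only [hz, Fin.val_mk]; omega)
      exact ⟨SimpleGraph.Walk.cons hadj w, by simp [hw]⟩

private lemma dist_eq_same {m : ℕ} (x y : Fin 2 × Fin m)
    (hp : (x.1.val + x.2.val) % 2 = (y.1.val + y.2.val) % 2) :
    (tensorProd (SimpleGraph.pathGraph 2) (SimpleGraph.pathGraph m)).dist x y
      = Nat.dist x.2.val y.2.val := by
  obtain ⟨w, hw⟩ := exists_walk _ x y rfl hp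
  refine le_antisymm (hw ▸ SimpleGraph.dist_le w) ?_
  obtain ⟨p, hp'⟩ := SimpleGraph.Reachable.exists_walk_length_eq_dist
    (G := tensorProd (SimpleGraph.pathGraph 2) (SimpleGraph.pathGraph m)) ⟨w⟩
  exact hp' ▸ dist_lower p

private lemma dist_eq_zero_diff {m : ℕ} (x y : Fin 2 × Fin m)
    (hp : (x.1.val + x.2.val) % 2 ≠ (y.1.val + y.2.val) % 2) :
    (tensorProd (SimpleGraph.pathGraph 2) (SimpleGraph.pathGraph m)).dist x y = 0 :=
  SimpleGraph.dist_eq_zero_of_not_reachable (fun h => hp (parity_of_reachable h))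

private noncomputable def gR (n : ℕ) : ℝ := ((harmonic n : ℚ) : ℝ)

private lemma gR_eq (n : ℕ) : ((harmonic n : ℚ) : ℝ) = gR n := rfl

private lemma gR_zero : gR 0 = 0 := by simp [gR]

private lemma harmonic_real (n : ℕ) :
    gR n = ∑ i ∈ Finset.range n, (1:ℝ)/((i+1 : ℕ) : ℝ) := by
  rw [gR, harmonic]
  push_cast
  simp [one_div]

private lemma sum_inv_natDist (m b : ℕ) (hb : b < m) :
    ∑ d ∈ Finset.range m, (1 : ℝ) / (Nat.dist b d) = gR b + gR (m - 1 - b) := by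
  have hr : Finset.range m = Finset.range ((b+1)+(m-1-b)) := by congr 1; omega
  rw [hr, Finset.sum_range_add, Finset.sum_range_succ]
  have part1 : ∑ d ∈ Finset.range b, (1:ℝ)/(Nat.dist b d) = gR b := by
    rw [harmonic_real, ← Finset.sum_range_reflect (fun i => (1:ℝ)/((i+1 : ℕ) : ℝ)) b]
    apply Finset.sum_congr rfl
    intro d hd
    rw [Finset.mem_range] at hd
    have h : Nat.dist b d = (b-1-d)+1 := by simp [Nat.dist]; omega
    rw [h]
  have part2 : ∑ i ∈ Finset.range (m-1-b), (1:ℝ)/(Nat.dist b (b+1+i)) = gR (m-1-b) := by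
    rw [harmonic_real]
    apply Finset.sum_congr rfl
    intro i hi
    have h : Nat.dist b (b+1+i) = i+1 := by simp [Nat.dist]; omega
    rw [h]
  rw [part1, part2, Nat.dist_self]
  norm_num

private lemma hc_eq (m : ℕ) (a : Fin 2) (b : Fin m) :
    harmonicCentrality (tensorProd (SimpleGraph.pathGraph 2) (SimpleGraph.pathGraph m)) (a, b) =
      (gR b.val + gR (m - 1 - b.val)) / (2 * m - 1) := by
  unfold harmonicCentrality
  have hcard : (Fintype.card (Fin 2 × Fin m) : ℝ) = 2 * m := by
    simp [Fintype.card_prod]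
    try push_cast
    try ring
  rw [hcard]
  congr 1
  rw [Finset.sum_erase (f := fun x => (1:ℝ)/(((tensorProd (SimpleGraph.pathGraph 2)
      (SimpleGraph.pathGraph m)).dist (a,b) x : ℕ) : ℝ)) _ (by simp [SimpleGraph.dist_self])]
  rw [Fintype.sum_prod_type_right]
  have inner : ∀ d : Fin m, (∑ c : Fin 2,
      (1:ℝ)/((tensorProd (SimpleGraph.pathGraph 2) (SimpleGraph.pathGraph m)).dist (a,b) (c,d))) =
      (1:ℝ)/(Nat.dist b.val d.val) := by
    intro d
    rw [Fin.sum_univ_two]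
    by_cases hpar : (a.val + b.val) % 2 = ((0:Fin 2).val + d.val) % 2
    · rw [dist_eq_same (a,b) ((0:Fin 2),d) hpar,
        dist_eq_zero_diff (a,b) ((1:Fin 2),d)
          (by simp only [Fin.val_zero, Fin.val_one] at hpar ⊢; omega)]
      simp
    · rw [dist_eq_zero_diff (a,b) ((0:Fin 2),d) hpar,
        dist_eq_same (a,b) ((1:Fin 2),d)
          (by simp only [Fin.val_zero, Fin.val_one] at hpar ⊢; omega)]
      simp
  rw [Finset.sum_congr rfl (fun d _ => inner d),
    Fin.sum_univ_eq_sum_range (fun d => (1:ℝ)/(Nat.dist b.val d)) m]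
  exact sum_inv_natDist m b.val b.2

private lemma harmonic_le_center (k : ℕ) : ∀ j : ℕ, j ≤ k →
    harmonic (k - j) + harmonic (k + j) ≤ 2 * harmonic k := by
  intro j
  induction j with
  | zero => intro _; simp; ring_nf; exact le_refl _
  | succ j ih =>
    intro hj
    have h1 := ih (by omega)
    have e2 : harmonic (k - j) = harmonic (k - (j+1)) + ((k - j : ℕ) : ℚ)⁻¹ := by
      rw [show k - j = (k - (j+1)) + 1 from by omega, harmonic_succ,
        show k - (j+1) + 1 = k - j from by omega]
    have e3 : harmonic (k + (j+1)) = harmonic (k + j) + ((k + j + 1 : ℕ) : ℚ)⁻¹ := by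
      rw [show k + (j+1) = (k + j) + 1 from rfl, harmonic_succ]
    have hpos : (0:ℚ) < ((k - j : ℕ) : ℚ) := by
      have : 0 < k - j := by omega
      exact_mod_cast this
    have hle : ((k - j : ℕ) : ℚ) ≤ ((k + j + 1 : ℕ) : ℚ) := by
      have : k - j ≤ k + j + 1 := by omega
      exact_mod_cast this
    have hinv : ((k + j + 1 : ℕ) : ℚ)⁻¹ ≤ ((k - j : ℕ) : ℚ)⁻¹ :=
      inv_anti₀ hpos hle
    linarith

private lemma g_le (k b : ℕ) (hb : b < 2*k+1) :
    harmonic b + harmonic (2*k - b) ≤ 2 * harmonic k := by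
  rcases le_or_gt b k with h | h
  · have h2 := harmonic_le_center k (k - b) (by omega)
    rw [show k - (k-b) = b from by omega, show k + (k-b) = 2*k - b from by omega] at h2
    exact h2
  · have h2 := harmonic_le_center k (b - k) (by omega)
    rw [show k - (b-k) = 2*k - b from by omega, show k + (b-k) = b from by omega] at h2
    linarith

private lemma sum_Icc_split (k : ℕ) (hk : 1 ≤ k) (f : ℕ → ℝ) (h0 : f 0 = 0) :
    ∑ j ∈ Finset.Icc 2 k, (f (j-1) + f (2*k+1-j)) =
      (∑ b ∈ Finset.range (2*k+1), f b) - f k - f (2*k) := by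
  obtain ⟨j, rfl⟩ : ∃ j, k = j+1 := ⟨k-1, by omega⟩
  rw [Finset.sum_add_distrib]
  have hS1 : ∑ i ∈ Finset.Icc 2 (j+1), f (i-1) = ∑ i ∈ Finset.range j, f (i+1) := by
    rw [← Finset.Ico_add_one_right_eq_Icc, Finset.sum_Ico_eq_sum_range]
    apply Finset.sum_congr (by congr 1 <;> omega)
    intro i hi
    congr 1 <;> omega
  have hS2 : ∑ i ∈ Finset.Icc 2 (j+1), f (2*(j+1)+1-i) = ∑ i ∈ Finset.range j, f (j+2+i) := by
    rw [← Finset.Ico_add_one_right_eq_Icc, Finset.sum_Ico_eq_sum_range,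
      ← Finset.sum_range_reflect (fun i => f (j+2+i)) j]
    apply Finset.sum_congr (by congr 1 <;> omega)
    intro i hi
    rw [Finset.mem_range] at hi
    congr 1 <;> omega
  rw [hS1, hS2, show 2*(j+1)+1 = (j+2)+(j+1) from by ring, Finset.sum_range_add,
    Finset.sum_range_succ (fun i => f (j+2+i)) j,
    show j+2+j = 2*(j+1) from by ring,
    show j+2 = (j+1)+1 from rfl, Finset.sum_range_succ f (j+1),
    Finset.sum_range_succ' f j, h0]
  ring

/-- Theorem 3.10 (odd case): harmonic centralization of `P₂ × Pₘ` for odd `m`. -/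
theorem harmonicCentralization_tensorProd_path_path_odd (m : ℕ) (hm : 3 ≤ m) (hodd : Odd m) :
    harmonicCentralization (tensorProd (SimpleGraph.pathGraph 2) (SimpleGraph.pathGraph m)) =
      4 * (((m : ℝ) - 1) * (harmonic ((m - 1) / 2) : ℝ) - (harmonic (m - 1) : ℝ)
          - ∑ j ∈ Finset.Icc 2 ((m - 1) / 2),
              ((harmonic (j - 1) : ℝ) + (harmonic (m - j) : ℝ))) /
        (((m : ℝ) - 1) * (2 * (m : ℝ) - 1)) := by
  obtain ⟨k, hk⟩ := hodd
  have hk' : m = 2*k+1 := by omega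
  have hk1 : 1 ≤ k := by omega
  have hkm : k < m := by omega
  have hmR : (3:ℝ) ≤ (m:ℝ) := by exact_mod_cast hm
  have hden : (0:ℝ) < 2*(m:ℝ)-1 := by linarith
  -- every vertex has harmonic centrality at most that of the center
  have hM : ∀ v : Fin 2 × Fin m,
      harmonicCentrality (tensorProd (SimpleGraph.pathGraph 2) (SimpleGraph.pathGraph m)) v
        ≤ 2 * gR k / (2*(m:ℝ)-1) := by
    rintro ⟨a, b⟩
    rw [hc_eq]
    have hb2 := b.2
    have hnum : gR b.val + gR (m - 1 - b.val) ≤ 2 * gR k := by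
      rw [show m - 1 - b.val = 2*k - b.val from by omega]
      simp only [gR]
      exact_mod_cast g_le k b.val (by omega)
    exact (div_le_div_iff_of_pos_right hden).mpr hnum
  -- the value at the center
  have hcen : harmonicCentrality (tensorProd (SimpleGraph.pathGraph 2)
      (SimpleGraph.pathGraph m)) ((0 : Fin 2), (⟨k, hkm⟩ : Fin m)) = 2 * gR k / (2*(m:ℝ)-1) := by
    rw [hc_eq]
    simp only [Fin.val_mk]
    rw [show m - 1 - k = k from by omega]
    ring
  have _ne : Nonempty (Fin 2 × Fin m) := ⟨((0 : Fin 2), (⟨k, hkm⟩ : Fin m))⟩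
  have hsup : (⨆ v : Fin 2 × Fin m, harmonicCentrality (tensorProd (SimpleGraph.pathGraph 2)
      (SimpleGraph.pathGraph m)) v) = 2 * gR k / (2*(m:ℝ)-1) :=
    le_antisymm (ciSup_le hM) (hcen ▸ le_ciSup (Finite.bddAbove_range _)
      ((0 : Fin 2), (⟨k, hkm⟩ : Fin m)))
  unfold harmonicCentralization
  rw [hsup]
  have hcard : (Fintype.card (Fin 2 × Fin m) : ℝ) = 2 * m := by
    simp [Fintype.card_prod]
    try push_cast
    try ring
  rw [hcard]
  -- compute the sum of deviations
  have h1 : ∀ a : Fin 2, ∑ b : Fin m,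
      (2 * gR k / (2*(m:ℝ)-1) - harmonicCentrality (tensorProd (SimpleGraph.pathGraph 2)
        (SimpleGraph.pathGraph m)) (a, b))
      = ∑ b ∈ Finset.range m, (2 * gR k / (2*(m:ℝ)-1) - (gR b + gR (m-1-b)) / (2*(m:ℝ)-1)) := by
    intro a
    rw [← Fin.sum_univ_eq_sum_range
      (fun b => 2 * gR k / (2*(m:ℝ)-1) - (gR b + gR (m-1-b)) / (2*(m:ℝ)-1)) m]
    apply Finset.sum_congr rfl
    intro b _
    rw [hc_eq]
  have hsum1 : ∑ u : Fin 2 × Fin m,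
      (2 * gR k / (2*(m:ℝ)-1) - harmonicCentrality (tensorProd (SimpleGraph.pathGraph 2)
        (SimpleGraph.pathGraph m)) u)
      = 2 * ∑ b ∈ Finset.range m,
          (2 * gR k / (2*(m:ℝ)-1) - (gR b + gR (m-1-b)) / (2*(m:ℝ)-1)) := by
    rw [Fintype.sum_prod_type, Fin.sum_univ_two, h1 0, h1 1]
    ring
  rw [hsum1]
  have hrefl : ∑ b ∈ Finset.range m, gR (m-1-b) = ∑ b ∈ Finset.range m, gR b :=
    Finset.sum_range_reflect (fun b => gR b) m
  have hsum2 : ∑ b ∈ Finset.range m,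
      (2 * gR k / (2*(m:ℝ)-1) - (gR b + gR (m-1-b)) / (2*(m:ℝ)-1))
      = m * (2 * gR k / (2*(m:ℝ)-1)) - (2 * ∑ b ∈ Finset.range m, gR b) / (2*(m:ℝ)-1) := by
    rw [Finset.sum_sub_distrib, Finset.sum_const, Finset.card_range, ← Finset.sum_div,
      Finset.sum_add_distrib, hrefl]
    push_cast
    ring
  rw [hsum2]
  -- rewrite the right-hand side
  have e1 : (m - 1) / 2 = k := by omega
  have e2 : m - 1 = 2*k := by omega
  have hIcc : ∑ j ∈ Finset.Icc 2 k,
      ((harmonic (j - 1) : ℝ) + (harmonic (m - j) : ℝ))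
      = (∑ b ∈ Finset.range m, gR b) - gR k - gR (2*k) := by
    have hs := sum_Icc_split k hk1 gR gR_zero
    rw [show 2*k+1 = m from by omega] at hs
    simpa only [gR_eq] using hs
  rw [e1, e2, hIcc, gR_eq, gR_eq]
  have hm1 : ((m:ℝ) - 1) ≠ 0 := by linarith
  have hm2 : (2*(m:ℝ) - 1) ≠ 0 := by linarith
  have hm3 : (2*(m:ℝ) - 2) ≠ 0 := by linarith
  rw [div_div_eq_mul_div, div_eq_div_iff (by linarith : ((2:ℝ)*(m:ℝ)-2) ≠ 0)
    (by intro h; apply hm1; exact mul_eq_zero.mp h |>.elim id (fun h2 => absurd h2 hm2) : ((m:ℝ)-1)*(2*(m:ℝ)-1) ≠ 0)]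
  field_simp
  ring
end
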